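/- For any non-degenerated Boolean function f : {0,1}^n → {0,1}, the energy complexity of f satisfies EC(f) ≥ (1/2)·log₂ n. -/
import Mathlib


/-- A gate in a Boolean circuit over the standard basis `{∨₂, ∧₂, ¬}`:
input gates labelled by variables, constant gates, and `∧`/`∨`/`¬` gates
whose arguments are (indices of) earlier gates. -/
inductive Gate (n : ℕ) : Type where
  | input : Fin n → Gate n
  | const : Bool → Gate n
  | and : ℕ → ℕ → Gate n
  | or : ℕ → ℕ → Gate n
  | not : ℕ → Gate n
deriving DecidableEq

/-- The indices of the incoming gates of a gate. -/
def Gate.deps {n : ℕ} : Gate n → List ℕ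
  | .and a b => [a, b]
  | .or a b => [a, b]
  | .not a => [a]
  | _ => []

/-- Inner gates are the non-input (and non-constant) gates, i.e. `∧`, `∨`, `¬` gates. -/
def Gate.isInner {n : ℕ} : Gate n → Bool
  | .and _ _ => true
  | .or _ _ => true
  | .not _ => true
  | _ => false

/-- A Boolean circuit over the standard basis on `n` input variables: a sequence of
gates (topologically sorted, so each gate only takes earlier gates as inputs,
which makes the underlying graph acyclic) together with a designated output gate. -/
structure Circuit (n : ℕ) : Type where
  size : ℕ
  gates : Fin size → Gate n
  out : Fin size
  wf : ∀ i : Fin size, ∀ j ∈ (gates i).deps, j < (i : ℕ)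

/-- The Boolean value of gate `i` of circuit `C` under input `x`. -/
def Circuit.evalGate {n : ℕ} (C : Circuit n) (x : Fin n → Bool) (i : ℕ) (h : i < C.size) :
    Bool :=
  match hg : C.gates ⟨i, h⟩ with
  | .input j => x j
  | .const b => b
  | .not a =>
      have ha : a < i := C.wf ⟨i, h⟩ a (by rw [hg]; simp [Gate.deps])
      ! C.evalGate x a (ha.trans h)
  | .and a b =>
      have ha : a < i := C.wf ⟨i, h⟩ a (by rw [hg]; simp [Gate.deps])
      have hb : b < i := C.wf ⟨i, h⟩ b (by rw [hg]; simp [Gate.deps])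
      C.evalGate x a (ha.trans h) && C.evalGate x b (hb.trans h)
  | .or a b =>
      have ha : a < i := C.wf ⟨i, h⟩ a (by rw [hg]; simp [Gate.deps])
      have hb : b < i := C.wf ⟨i, h⟩ b (by rw [hg]; simp [Gate.deps])
      C.evalGate x a (ha.trans h) || C.evalGate x b (hb.trans h)
termination_by i

/-- The output of circuit `C` on input `x`. -/
def Circuit.output {n : ℕ} (C : Circuit n) (x : Fin n → Bool) : Bool :=
  C.evalGate x C.out C.out.isLt

/-- `C` computes the Boolean function `f`. -/
def Circuit.Computes {n : ℕ} (C : Circuit n) (f : (Fin n → Bool) → Bool) : Prop :=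
  ∀ x, C.output x = f x

/-- The number of activated inner gates of `C` under input `x`. -/
def Circuit.energyAt {n : ℕ} (C : Circuit n) (x : Fin n → Bool) : ℕ :=
  (Finset.univ.filter fun i : Fin C.size =>
    (C.gates i).isInner = true ∧ C.evalGate x i i.isLt = true).card

/-- The energy complexity `EC(C)` of a circuit `C`: the maximum number of
activated inner gates over all inputs. -/
def Circuit.energy {n : ℕ} (C : Circuit n) : ℕ :=
  Finset.univ.sup fun x : Fin n → Bool => C.energyAt x

/-- The energy complexity `EC(f)` of a Boolean function `f`: the minimum of `EC(C)`
over all circuits `C` computing `f`. -/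
noncomputable def EC {n : ℕ} (f : (Fin n → Bool) → Bool) : ℕ :=
  sInf {k | ∃ C : Circuit n, C.Computes f ∧ C.energy = k}

/-- `f` is non-degenerated: every variable is sensitive for some input. -/
def NonDegenerate {n : ℕ} (f : (Fin n → Bool) → Bool) : Prop :=
  ∀ i : Fin n, ∃ x : Fin n → Bool, f (Function.update x i (!x i)) ≠ f x


section
variable {n : ℕ} (C : Circuit n) (x : Fin n → Bool)

theorem Circuit.evalGate_input {g : ℕ} (h : g < C.size) {j : Fin n}
    (hg : C.gates ⟨g, h⟩ = .input j) : C.evalGate x g h = x j := by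
  rw [Circuit.evalGate]; split <;> simp_all

theorem Circuit.evalGate_const {g : ℕ} (h : g < C.size) {b : Bool}
    (hg : C.gates ⟨g, h⟩ = .const b) : C.evalGate x g h = b := by
  rw [Circuit.evalGate]; split <;> simp_all

theorem Circuit.evalGate_not {g : ℕ} (h : g < C.size) {a : ℕ}
    (hg : C.gates ⟨g, h⟩ = .not a) (ha : a < C.size) :
    C.evalGate x g h = ! C.evalGate x a ha := by
  rw [Circuit.evalGate]; split <;> simp_all

theorem Circuit.evalGate_and {g : ℕ} (h : g < C.size) {a b : ℕ}
    (hg : C.gates ⟨g, h⟩ = .and a b) (ha : a < C.size) (hb : b < C.size) :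
    C.evalGate x g h = (C.evalGate x a ha && C.evalGate x b hb) := by
  rw [Circuit.evalGate]; split <;> simp_all

theorem Circuit.evalGate_or {g : ℕ} (h : g < C.size) {a b : ℕ}
    (hg : C.gates ⟨g, h⟩ = .or a b) (ha : a < C.size) (hb : b < C.size) :
    C.evalGate x g h = (C.evalGate x a ha || C.evalGate x b hb) := by
  rw [Circuit.evalGate]; split <;> simp_all

end
namespace Circuit
variable {n : ℕ} (C : Circuit n)

/-- Follow a path downwards from gate `g` according to the booleans. -/
def descend (C : Circuit n) : List Bool → ℕ → ℕ
  | [], g => g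
  | bb :: bs, g =>
    if h : g < C.size then
      match C.gates ⟨g, h⟩ with
      | .and a b => C.descend bs (if bb then a else b)
      | .or a b => C.descend bs (if bb then a else b)
      | .not a => C.descend bs a
      | _ => g
    else g

theorem descend_lt {g : ℕ} (h : g < C.size) : ∀ bs : List Bool, C.descend bs g < C.size := by
  intro bs
  induction bs generalizing g with
  | nil => simpa [descend]
  | cons bb bs ih =>
    rw [descend, dif_pos h]
    split
    · rename_i a b hg
      exact ih ((C.wf ⟨g,h⟩ _ (by rw [hg]; cases bb <;> simp [Gate.deps])).trans h)
    · rename_i a b hg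
      exact ih ((C.wf ⟨g,h⟩ _ (by rw [hg]; cases bb <;> simp [Gate.deps])).trans h)
    · rename_i a hg
      exact ih ((C.wf ⟨g,h⟩ _ (by rw [hg]; simp [Gate.deps])).trans h)
    · exact h

theorem descend_append (bs cs : List Bool) (g : ℕ) :
    C.descend (bs ++ cs) g = C.descend cs (C.descend bs g) := by
  induction bs generalizing g with
  | nil => rfl
  | cons bb bs ih =>
    rw [List.cons_append, descend, descend]
    by_cases h : g < C.size
    · rw [dif_pos h, dif_pos h]
      split
      · exact ih _
      · exact ih _
      · exact ih _
      · cases cs with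
        | nil => rfl
        | cons c cs' =>
          rw [descend, dif_pos h]
          split <;> simp_all
    · rw [dif_neg h, dif_neg h]
      cases cs <;> simp [descend, h]

theorem descend_input {g : ℕ} (h : g < C.size) {j : Fin n} (hg : C.gates ⟨g, h⟩ = .input j)
    (bs : List Bool) : C.descend bs g = g := by
  cases bs with
  | nil => rfl
  | cons bb bs => rw [descend, dif_pos h]; split <;> simp_all

theorem descend_const {g : ℕ} (h : g < C.size) {b : Bool} (hg : C.gates ⟨g, h⟩ = .const b)
    (bs : List Bool) : C.descend bs g = g := by
  cases bs with
  | nil => rfl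
  | cons bb bs => rw [descend, dif_pos h]; split <;> simp_all

/-- Number of activated inner gates with index at most `g`. -/
def actBelow (C : Circuit n) (x : Fin n → Bool) (g : ℕ) : ℕ :=
  (Finset.univ.filter fun j : Fin C.size =>
    (j : ℕ) ≤ g ∧ (C.gates j).isInner = true ∧ C.evalGate x j j.isLt = true).card

theorem actBelow_mono (x : Fin n → Bool) {a g : ℕ} (hag : a ≤ g) :
    C.actBelow x a ≤ C.actBelow x g := by
  apply Finset.card_le_card
  intro j hj
  simp only [Finset.mem_filter] at *
  exact ⟨hj.1, hj.2.1.trans hag, hj.2.2⟩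

theorem actBelow_lt (x : Fin n → Bool) {a g : ℕ} (hag : a < g) (h : g < C.size)
    (hin : (C.gates ⟨g, h⟩).isInner = true) (hact : C.evalGate x g h = true) :
    C.actBelow x a < C.actBelow x g := by
  apply Finset.card_lt_card
  constructor
  · intro j hj
    simp only [Finset.mem_filter] at *
    exact ⟨hj.1, hj.2.1.trans hag.le, hj.2.2⟩
  · intro hsub
    have := hsub (Finset.mem_filter.mpr ⟨Finset.mem_univ ⟨g, h⟩, le_refl g, hin, hact⟩)
    simp only [Finset.mem_filter] at this
    omega

theorem actBelow_le_energyAt (x : Fin n → Bool) (g : ℕ) :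
    C.actBelow x g ≤ C.energyAt x := by
  apply Finset.card_le_card
  intro j hj
  simp only [Finset.mem_filter] at *
  exact ⟨hj.1, hj.2.2⟩

theorem energyAt_le_energy (x : Fin n → Bool) : C.energyAt x ≤ C.energy :=
  Finset.le_sup (Finset.mem_univ x)

end Circuit
namespace Circuit
variable {n : ℕ}

theorem sens_path (C : Circuit n) (i : Fin n) (x x' : Fin n → Bool)
    (hne : ∀ j, j ≠ i → x' j = x j) :
    ∀ g (h : g < C.size), C.evalGate x g h ≠ C.evalGate x' g h →
    ∃ bs : List Bool, C.gates ⟨C.descend bs g, C.descend_lt h bs⟩ = .input i ∧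
      bs.length ≤ C.actBelow x g + C.actBelow x' g := by
  intro g
  induction g using Nat.strong_induction_on with
  | _ g IH =>
  intro h hdiff
  cases hg : C.gates ⟨g, h⟩ with
  | input j =>
    refine ⟨[], ?_, by simp⟩
    · simp only [descend]
      rw [hg]
      congr 1
      by_contra hji
      have hj : j ≠ i := fun e => hji (by rw [e])
      rw [C.evalGate_input x h hg, C.evalGate_input x' h hg, hne j hj] at hdiff
      exact hdiff rfl
  | const b =>
    rw [C.evalGate_const x h hg, C.evalGate_const x' h hg] at hdiff
    exact absurd rfl hdiff
  | not a =>
    have ha : a < g := C.wf ⟨g, h⟩ a (by rw [hg]; simp [Gate.deps])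
    have ha' : a < C.size := ha.trans h
    have hdiff0 := hdiff
    rw [C.evalGate_not x h hg ha', C.evalGate_not x' h hg ha'] at hdiff
    have hd : C.evalGate x a ha' ≠ C.evalGate x' a ha' := fun e => hdiff (by rw [e])
    obtain ⟨bs, hbs, hlen⟩ := IH a ha ha' hd
    have hact : C.evalGate x g h = true ∨ C.evalGate x' g h = true := by
      by_contra hc
      push_neg at hc
      exact hdiff0 (by rw [Bool.eq_false_iff.mpr hc.1, Bool.eq_false_iff.mpr hc.2])
    have hdes : C.descend (true :: bs) g = C.descend bs a := by
      rw [descend, dif_pos h]; split <;> simp_all [descend]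
    refine ⟨true :: bs, ?_, ?_⟩
    · rw [show (⟨C.descend (true :: bs) g, _⟩ : Fin C.size) = ⟨C.descend bs a, C.descend_lt ha' bs⟩
        from Fin.ext hdes]
      exact hbs
    · have hin : (C.gates ⟨g, h⟩).isInner = true := by rw [hg]; rfl
      simp only [List.length_cons]
      rcases hact with hact | hact
      · have h1 := C.actBelow_lt x ha h hin hact
        have h2 := C.actBelow_mono x' ha.le
        omega
      · have h1 := C.actBelow_lt x' ha h hin hact
        have h2 := C.actBelow_mono x ha.le
        omega
  | and a b =>
    have ha : a < g := C.wf ⟨g, h⟩ a (by rw [hg]; simp [Gate.deps])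
    have hb : b < g := C.wf ⟨g, h⟩ b (by rw [hg]; simp [Gate.deps])
    have ha' : a < C.size := ha.trans h
    have hb' : b < C.size := hb.trans h
    have hdiff0 := hdiff
    rw [C.evalGate_and x h hg ha' hb', C.evalGate_and x' h hg ha' hb'] at hdiff
    have hact : C.evalGate x g h = true ∨ C.evalGate x' g h = true := by
      by_contra hc
      push_neg at hc
      exact hdiff0 (by rw [Bool.eq_false_iff.mpr hc.1, Bool.eq_false_iff.mpr hc.2])
    have hin : (C.gates ⟨g, h⟩).isInner = true := by rw [hg]; rfl
    have hd : C.evalGate x a ha' ≠ C.evalGate x' a ha' ∨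
        C.evalGate x b hb' ≠ C.evalGate x' b hb' := by
      by_contra hc
      push_neg at hc
      exact hdiff (by rw [hc.1, hc.2])
    have key : ∀ (c : ℕ) (hc : c < g) (hc' : c < C.size) (bb : Bool),
        C.descend [bb] g = c →
        C.evalGate x c hc' ≠ C.evalGate x' c hc' →
        ∃ bs : List Bool, C.gates ⟨C.descend bs g, C.descend_lt h bs⟩ = .input i ∧
          bs.length ≤ C.actBelow x g + C.actBelow x' g := by
      intro c hc hc' bb hstep hdc
      obtain ⟨bs, hbs, hlen⟩ := IH c hc hc' hdc
      have hdes : C.descend (bb :: bs) g = C.descend bs c := by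
        have : (bb :: bs) = [bb] ++ bs := rfl
        rw [this, C.descend_append, hstep]
      refine ⟨bb :: bs, ?_, ?_⟩
      · rw [show (⟨C.descend (bb :: bs) g, _⟩ : Fin C.size) = ⟨C.descend bs c, C.descend_lt hc' bs⟩
          from Fin.ext hdes]
        exact hbs
      · simp only [List.length_cons]
        rcases hact with hact2 | hact2
        · have h1 := C.actBelow_lt x hc h hin hact2
          have h2 := C.actBelow_mono x' hc.le
          omega
        · have h1 := C.actBelow_lt x' hc h hin hact2
          have h2 := C.actBelow_mono x hc.le
          omega
    have hstepa : C.descend [true] g = a := by rw [descend, dif_pos h]; split <;> simp_all [descend]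
    have hstepb : C.descend [false] g = b := by rw [descend, dif_pos h]; split <;> simp_all [descend]
    rcases hd with hd | hd
    · exact key a ha ha' true hstepa hd
    · exact key b hb hb' false hstepb hd
  | or a b =>
    have ha : a < g := C.wf ⟨g, h⟩ a (by rw [hg]; simp [Gate.deps])
    have hb : b < g := C.wf ⟨g, h⟩ b (by rw [hg]; simp [Gate.deps])
    have ha' : a < C.size := ha.trans h
    have hb' : b < C.size := hb.trans h
    have hdiff0 := hdiff
    rw [C.evalGate_or x h hg ha' hb', C.evalGate_or x' h hg ha' hb'] at hdiff
    have hact : C.evalGate x g h = true ∨ C.evalGate x' g h = true := by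
      by_contra hc
      push_neg at hc
      exact hdiff0 (by rw [Bool.eq_false_iff.mpr hc.1, Bool.eq_false_iff.mpr hc.2])
    have hin : (C.gates ⟨g, h⟩).isInner = true := by rw [hg]; rfl
    have hd : C.evalGate x a ha' ≠ C.evalGate x' a ha' ∨
        C.evalGate x b hb' ≠ C.evalGate x' b hb' := by
      by_contra hc
      push_neg at hc
      exact hdiff (by rw [hc.1, hc.2])
    have key : ∀ (c : ℕ) (hc : c < g) (hc' : c < C.size) (bb : Bool),
        C.descend [bb] g = c →
        C.evalGate x c hc' ≠ C.evalGate x' c hc' →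
        ∃ bs : List Bool, C.gates ⟨C.descend bs g, C.descend_lt h bs⟩ = .input i ∧
          bs.length ≤ C.actBelow x g + C.actBelow x' g := by
      intro c hc hc' bb hstep hdc
      obtain ⟨bs, hbs, hlen⟩ := IH c hc hc' hdc
      have hdes : C.descend (bb :: bs) g = C.descend bs c := by
        have : (bb :: bs) = [bb] ++ bs := rfl
        rw [this, C.descend_append, hstep]
      refine ⟨bb :: bs, ?_, ?_⟩
      · rw [show (⟨C.descend (bb :: bs) g, _⟩ : Fin C.size) = ⟨C.descend bs c, C.descend_lt hc' bs⟩
          from Fin.ext hdes]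
        exact hbs
      · simp only [List.length_cons]
        rcases hact with hact2 | hact2
        · have h1 := C.actBelow_lt x hc h hin hact2
          have h2 := C.actBelow_mono x' hc.le
          omega
        · have h1 := C.actBelow_lt x' hc h hin hact2
          have h2 := C.actBelow_mono x hc.le
          omega
    have hstepa : C.descend [true] g = a := by rw [descend, dif_pos h]; split <;> simp_all [descend]
    have hstepb : C.descend [false] g = b := by rw [descend, dif_pos h]; split <;> simp_all [descend]
    rcases hd with hd | hd
    · exact key a ha ha' true hstepa hd
    · exact key b hb hb' false hstepb hd

end Circuit
theorem circuit_lower_bound {n : ℕ} (C : Circuit n) (f : (Fin n → Bool) → Bool)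
    (hC : C.Computes f) (hf : NonDegenerate f) : n ≤ 2 ^ (2 * C.energy) := by
  set L := 2 * C.energy with hL
  have key : ∀ i : Fin n, ∃ v : Fin L → Bool,
      ∃ hlt : C.descend (List.ofFn v) C.out < C.size,
      C.gates ⟨C.descend (List.ofFn v) C.out, hlt⟩ = Gate.input i := by
    intro i
    obtain ⟨x, hx⟩ := hf i
    set x' := Function.update x i (!x i) with hx'
    have hne : ∀ j, j ≠ i → x' j = x j := fun j hj => Function.update_of_ne hj _ x
    have hdiff : C.evalGate x (C.out : ℕ) C.out.isLt ≠ C.evalGate x' (C.out : ℕ) C.out.isLt := by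
      intro e
      exact hx (by rw [← hC x', ← hC x, Circuit.output, Circuit.output, e])
    obtain ⟨bs, hbs, hlen⟩ := C.sens_path i x' x (fun j hj => (hne j hj).symm)
      (C.out : ℕ) C.out.isLt (fun e => hdiff e.symm)
    have hlenL : bs.length ≤ L := by
      calc bs.length ≤ C.actBelow x' (C.out : ℕ) + C.actBelow x (C.out : ℕ) := hlen
        _ ≤ C.energyAt x' + C.energyAt x :=
          Nat.add_le_add (C.actBelow_le_energyAt x' _) (C.actBelow_le_energyAt x _)
        _ ≤ C.energy + C.energy :=
          Nat.add_le_add (C.energyAt_le_energy x') (C.energyAt_le_energy x)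
        _ = L := by rw [hL]; ring
    set bs' := bs ++ List.replicate (L - bs.length) false with hbs'
    have hlen' : bs'.length = L := by
      rw [hbs', List.length_append, List.length_replicate]
      omega
    refine ⟨fun j => bs'.get ⟨j, by rw [hlen']; exact j.isLt⟩, ?_, ?_⟩
    · have hofn : List.ofFn (fun j : Fin L => bs'.get ⟨j, by rw [hlen']; exact j.isLt⟩) = bs' := by
        apply List.ext_get
        · simp [hlen']
        · intro k h1 h2
          simp
      rw [hofn, hbs', C.descend_append]
      rw [C.descend_input (C.descend_lt C.out.isLt bs) hbs]
      exact C.descend_lt C.out.isLt bs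
    · have hofn : List.ofFn (fun j : Fin L => bs'.get ⟨j, by rw [hlen']; exact j.isLt⟩) = bs' := by
        apply List.ext_get
        · simp [hlen']
        · intro k h1 h2
          simp
      simp only [hofn, hbs', C.descend_append]
      rw [show (⟨C.descend (List.replicate (L - bs.length) false) (C.descend bs C.out),
          _⟩ : Fin C.size) = ⟨C.descend bs (C.out : ℕ), C.descend_lt C.out.isLt bs⟩
        from Fin.ext (C.descend_input (C.descend_lt C.out.isLt bs) hbs _)]
      exact hbs
  choose v hvlt hv using key
  have hinj : Function.Injective v := by
    intro i i' he
    have h1 := hv i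
    have h2 := hv i'
    have hfe : (⟨C.descend (List.ofFn (v i)) C.out, hvlt i⟩ : Fin C.size)
        = ⟨C.descend (List.ofFn (v i')) C.out, hvlt i'⟩ := Fin.ext (congrArg (fun w => C.descend (List.ofFn w) (C.out : ℕ)) he)
    rw [hfe] at h1
    injection h1.symm.trans h2 with h3
  calc n = Fintype.card (Fin n) := (Fintype.card_fin n).symm
    _ ≤ Fintype.card (Fin L → Bool) := Fintype.card_le_of_injective v hinj
    _ = 2 ^ L := by simp
/-- Boolean formula expressions. -/
inductive Expr (n : ℕ) : Type where
  | var : Fin n → Expr n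
  | const : Bool → Expr n
  | and : Expr n → Expr n → Expr n
  | or : Expr n → Expr n → Expr n
  | not : Expr n → Expr n

def Expr.eval {n : ℕ} (x : Fin n → Bool) : Expr n → Bool
  | .var i => x i
  | .const b => b
  | .and e1 e2 => e1.eval x && e2.eval x
  | .or e1 e2 => e1.eval x || e2.eval x
  | .not e => ! e.eval x

/-- Shift dependency indices of a gate by `k`. -/
def Gate.shift {n : ℕ} (k : ℕ) : Gate n → Gate n
  | .and a b => .and (k + a) (k + b)
  | .or a b => .or (k + a) (k + b)
  | .not a => .not (k + a)
  | g => g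

/-- Compile an expression into a gate list; the last gate computes the expression. -/
def Expr.compile {n : ℕ} : Expr n → List (Gate n)
  | .var i => [.input i]
  | .const b => [.const b]
  | .not e =>
    let l := e.compile
    l ++ [.not (l.length - 1)]
  | .and e1 e2 =>
    let l1 := e1.compile
    let l2 := (e2.compile).map (Gate.shift l1.length)
    l1 ++ l2 ++ [.and (l1.length - 1) (l1.length + l2.length - 1)]
  | .or e1 e2 =>
    let l1 := e1.compile
    let l2 := (e2.compile).map (Gate.shift l1.length)
    l1 ++ l2 ++ [.or (l1.length - 1) (l1.length + l2.length - 1)]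

theorem Expr.compile_ne_nil {n : ℕ} (e : Expr n) : e.compile ≠ [] := by
  cases e <;> simp [Expr.compile]

/-- The value of a gate given the list of values of previous gates. -/
def gateStep {n : ℕ} (x : Fin n → Bool) (vs : List Bool) : Gate n → Bool
  | .input j => x j
  | .const b => b
  | .not a => ! vs.getD a false
  | .and a b => vs.getD a false && vs.getD b false
  | .or a b => vs.getD a false || vs.getD b false

/-- Evaluate a gate list, accumulating values. -/
def evalFrom {n : ℕ} (x : Fin n → Bool) : List Bool → List (Gate n) → List Bool
  | vs, [] => vs
  | vs, g :: l => evalFrom x (vs ++ [gateStep x vs g]) l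

theorem evalFrom_append {n : ℕ} (x : Fin n → Bool) (l1 l2 : List (Gate n)) :
    ∀ vs, evalFrom x vs (l1 ++ l2) = evalFrom x (evalFrom x vs l1) l2 := by
  induction l1 with
  | nil => intro vs; rfl
  | cons g l ih => intro vs; rw [List.cons_append, evalFrom, evalFrom, ih]

theorem evalFrom_length {n : ℕ} (x : Fin n → Bool) (l : List (Gate n)) :
    ∀ vs, (evalFrom x vs l).length = vs.length + l.length := by
  induction l with
  | nil => intro vs; simp [evalFrom]
  | cons g l ih => intro vs; rw [evalFrom, ih]; simp; omega

theorem evalFrom_prefix {n : ℕ} (x : Fin n → Bool) (l : List (Gate n)) :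
    ∀ vs, vs <+: evalFrom x vs l := by
  induction l with
  | nil => intro vs; exact List.prefix_refl vs
  | cons g l ih =>
    intro vs
    exact ((vs.prefix_append [gateStep x vs g]).trans (ih _))

theorem prefix_getD {l1 l2 : List Bool} (h : l1 <+: l2) {j : ℕ} (hj : j < l1.length) :
    l2.getD j false = l1.getD j false := by
  obtain ⟨t, ht⟩ := h
  rw [← ht, List.getD_append _ _ _ _ hj]

theorem getD_append_add (A B : List Bool) (a : ℕ) :
    (A ++ B).getD (A.length + a) false = B.getD a false := by
  rw [List.getD_append_right A B false _ (Nat.le_add_right _ _), Nat.add_sub_cancel_left]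

theorem evalFrom_shift {n : ℕ} (x : Fin n → Bool) (l : List (Gate n)) :
    ∀ (A B : List Bool), evalFrom x (A ++ B) (l.map (Gate.shift A.length)) =
      A ++ evalFrom x B l := by
  induction l with
  | nil => intro A B; rfl
  | cons g l ih =>
    intro A B
    rw [List.map_cons, evalFrom, evalFrom]
    have hstep : gateStep x (A ++ B) (Gate.shift A.length g) = gateStep x B g := by
      cases g <;>
        simp only [Gate.shift, gateStep, ← List.getD_eq_getElem?_getD, getD_append_add]
    rw [hstep, List.append_assoc]
    exact ih A (B ++ [gateStep x B g])
theorem Gate.deps_shift {n : ℕ} (k : ℕ) (g : Gate n) :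
    (Gate.shift k g).deps = g.deps.map (k + ·) := by
  cases g <;> simp [Gate.shift, Gate.deps]

theorem Expr.compile_wf {n : ℕ} (e : Expr n) :
    ∀ i (hi : i < e.compile.length), ∀ j ∈ (e.compile[i]'hi).deps, j < i := by
  induction e with
  | var v => intro i hi j hj; simp [Expr.compile] at hi; subst hi; simp [Expr.compile, Gate.deps] at hj
  | const b => intro i hi j hj; simp [Expr.compile] at hi; subst hi; simp [Expr.compile, Gate.deps] at hj
  | not e ih =>
    intro i hi j hj
    simp only [Expr.compile] at hi hj
    simp only [List.length_append, List.length_cons, List.length_nil] at hi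
    rcases Nat.lt_or_ge i e.compile.length with h | h
    · rw [List.getElem_append_left h] at hj
      exact ih i h j hj
    · have hieq : i = e.compile.length := by omega
      rw [List.getElem_append_right h] at hj
      simp only [hieq, Nat.sub_self, List.getElem_cons_zero, Gate.deps] at hj ⊢
      have := e.compile_ne_nil
      have : 0 < e.compile.length := List.length_pos_iff.mpr this
      simp at hj
      omega
  | and e1 e2 ih1 ih2 =>
    intro i hi j hj
    simp only [Expr.compile] at hi hj
    simp only [List.length_append, List.length_cons, List.length_nil, List.length_map] at hi
    have h1pos : 0 < e1.compile.length := List.length_pos_iff.mpr e1.compile_ne_nil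
    have h2pos : 0 < e2.compile.length := List.length_pos_iff.mpr e2.compile_ne_nil
    rcases Nat.lt_or_ge i (e1.compile.length + e2.compile.length) with h | h
    · rw [List.getElem_append_left (by simpa using h)] at hj
      rcases Nat.lt_or_ge i e1.compile.length with h' | h'
      · rw [List.getElem_append_left h'] at hj
        exact ih1 i h' j hj
      · have hlt2 : i - e1.compile.length < e2.compile.length := by omega
        rw [List.getElem_append_right (by simpa using h')] at hj
        rw [List.getElem_map] at hj
        rw [Gate.deps_shift] at hj
        simp only [List.mem_map] at hj
        obtain ⟨d, hd, hdj⟩ := hj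
        have := ih2 _ (by simpa using hlt2) d (by simpa using hd)
        omega
    · have hieq : i = e1.compile.length + e2.compile.length := by omega
      subst hieq
      rw [List.getElem_append_right (by simpa using h)] at hj
      simp only [List.length_append, List.length_map, Nat.sub_self] at hj
      simp [Gate.deps] at hj
      omega
  | or e1 e2 ih1 ih2 =>
    intro i hi j hj
    simp only [Expr.compile] at hi hj
    simp only [List.length_append, List.length_cons, List.length_nil, List.length_map] at hi
    have h1pos : 0 < e1.compile.length := List.length_pos_iff.mpr e1.compile_ne_nil
    have h2pos : 0 < e2.compile.length := List.length_pos_iff.mpr e2.compile_ne_nil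
    rcases Nat.lt_or_ge i (e1.compile.length + e2.compile.length) with h | h
    · rw [List.getElem_append_left (by simpa using h)] at hj
      rcases Nat.lt_or_ge i e1.compile.length with h' | h'
      · rw [List.getElem_append_left h'] at hj
        exact ih1 i h' j hj
      · have hlt2 : i - e1.compile.length < e2.compile.length := by omega
        rw [List.getElem_append_right (by simpa using h')] at hj
        rw [List.getElem_map] at hj
        rw [Gate.deps_shift] at hj
        simp only [List.mem_map] at hj
        obtain ⟨d, hd, hdj⟩ := hj
        have := ih2 _ (by simpa using hlt2) d (by simpa using hd)
        omega
    · have hieq : i = e1.compile.length + e2.compile.length := by omega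
      subst hieq
      rw [List.getElem_append_right (by simpa using h)] at hj
      simp only [List.length_append, List.length_map, Nat.sub_self] at hj
      simp [Gate.deps] at hj
      omega
/-- The circuit determined by a gate list (output = last gate). -/
def Circuit.ofList {n : ℕ} (l : List (Gate n)) (hl : l ≠ [])
    (hwf : ∀ i (hi : i < l.length), ∀ j ∈ (l[i]'hi).deps, j < i) : Circuit n where
  size := l.length
  gates := fun i => l[(i : ℕ)]'i.isLt
  out := ⟨l.length - 1, by have := List.length_pos_iff.mpr hl; omega⟩
  wf := fun i j hj => hwf i i.isLt j hj

theorem evalFrom_getD {n : ℕ} (x : Fin n → Bool) (l : List (Gate n)) (i : ℕ)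
    (hi : i < l.length) :
    (evalFrom x [] l).getD i false
      = gateStep x (evalFrom x [] (l.take i)) (l[i]'hi) := by
  have hdecomp : l = l.take i ++ (l[i]'hi :: l.drop (i + 1)) := by
    conv_lhs => rw [← List.take_append_drop i l]
    rw [List.drop_eq_getElem_cons hi]
  set P := evalFrom x [] (l.take i) with hP
  have hPlen : P.length = i := by
    rw [hP, evalFrom_length]
    simp [Nat.min_eq_left hi.le]
  have h1 : evalFrom x [] l
      = evalFrom x (P ++ [gateStep x P (l[i]'hi)]) (l.drop (i + 1)) := by
    conv_lhs => rw [hdecomp]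
    rw [evalFrom_append]
    rfl
  have hpre : (P ++ [gateStep x P (l[i]'hi)]) <+: evalFrom x [] l := by
    rw [h1]; exact evalFrom_prefix x _ _
  rw [prefix_getD hpre (by simp [hPlen])]
  rw [List.getD_append_right _ _ _ _ (by omega)]
  simp [hPlen]

theorem prefix_take {n : ℕ} (x : Fin n → Bool) (l : List (Gate n)) (i : ℕ) :
    evalFrom x [] (l.take i) <+: evalFrom x [] l := by
  conv_rhs => rw [← List.take_append_drop i l]
  rw [evalFrom_append]
  exact evalFrom_prefix x _ _

theorem Circuit.ofList_evalGate {n : ℕ} (l : List (Gate n)) (hl : l ≠ [])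
    (hwf : ∀ i (hi : i < l.length), ∀ j ∈ (l[i]'hi).deps, j < i) (x : Fin n → Bool) :
    ∀ i (h : i < (Circuit.ofList l hl hwf).size),
      (Circuit.ofList l hl hwf).evalGate x i h = (evalFrom x [] l).getD i false := by
  intro i
  induction i using Nat.strong_induction_on with
  | _ i IH =>
  intro h
  set C := Circuit.ofList l hl hwf with hC
  have hsize : C.size = l.length := rfl
  have hil : i < l.length := by omega
  have hgi : C.gates ⟨i, h⟩ = l[i]'hil := rfl
  have hPlen : (evalFrom x [] (l.take i)).length = i := by
    rw [evalFrom_length]; simp [Nat.min_eq_left hil.le]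
  have hgetD : ∀ a : ℕ, a < i →
      (evalFrom x [] (l.take i)).getD a false = (evalFrom x [] l).getD a false := by
    intro a ha
    exact (prefix_getD (prefix_take x l i) (by omega)).symm
  rw [evalFrom_getD x l i hil]
  cases hg : l[i]'hil with
  | input j =>
    rw [C.evalGate_input x h (by rw [hgi, hg])]
    rfl
  | const b =>
    rw [C.evalGate_const x h (by rw [hgi, hg])]
    rfl
  | not a =>
    have ha : a < i := hwf i hil a (by rw [hg]; simp [Gate.deps])
    have ha' : a < C.size := by omega
    rw [C.evalGate_not x h (by rw [hgi, hg]) ha']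
    rw [IH a ha ha']
    simp only [gateStep]
    rw [hgetD a ha]
  | and a b =>
    have ha : a < i := hwf i hil a (by rw [hg]; simp [Gate.deps])
    have hb : b < i := hwf i hil b (by rw [hg]; simp [Gate.deps])
    have ha' : a < C.size := by omega
    have hb' : b < C.size := by omega
    rw [C.evalGate_and x h (by rw [hgi, hg]) ha' hb']
    rw [IH a ha ha', IH b hb hb']
    simp only [gateStep]
    rw [hgetD a ha, hgetD b hb]
  | or a b =>
    have ha : a < i := hwf i hil a (by rw [hg]; simp [Gate.deps])
    have hb : b < i := hwf i hil b (by rw [hg]; simp [Gate.deps])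
    have ha' : a < C.size := by omega
    have hb' : b < C.size := by omega
    rw [C.evalGate_or x h (by rw [hgi, hg]) ha' hb']
    rw [IH a ha ha', IH b hb hb']
    simp only [gateStep]
    rw [hgetD a ha, hgetD b hb]
theorem Expr.compile_correct {n : ℕ} (e : Expr n) (x : Fin n → Bool) :
    (evalFrom x [] e.compile).getD (e.compile.length - 1) false = e.eval x := by
  induction e with
  | var v => rfl
  | const b => rfl
  | not e ih =>
    have hpos : 0 < e.compile.length := List.length_pos_iff.mpr e.compile_ne_nil
    simp only [Expr.compile, Expr.eval]
    rw [evalFrom_append]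
    set E := evalFrom x [] e.compile with hE
    have hElen : E.length = e.compile.length := by
      rw [hE, evalFrom_length]; simp
    show (evalFrom x (E ++ [gateStep x E (.not (e.compile.length - 1))]) []).getD _ false = _
    rw [evalFrom]
    simp only [gateStep]
    rw [List.length_append, List.length_cons, List.length_nil]
    rw [List.getD_append_right _ _ _ _ (by omega)]
    have : e.compile.length + (0 + 1) - 1 - E.length = 0 := by omega
    rw [this]
    simp only [List.getD_cons_zero]
    rw [ih]
  | and e1 e2 ih1 ih2 =>
    have h1pos : 0 < e1.compile.length := List.length_pos_iff.mpr e1.compile_ne_nil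
    have h2pos : 0 < e2.compile.length := List.length_pos_iff.mpr e2.compile_ne_nil
    simp only [Expr.compile, Expr.eval]
    rw [evalFrom_append, evalFrom_append]
    set E1 := evalFrom x [] e1.compile with hE1
    set E2 := evalFrom x [] e2.compile with hE2
    have hE1len : E1.length = e1.compile.length := by rw [hE1, evalFrom_length]; simp
    have hE2len : E2.length = e2.compile.length := by rw [hE2, evalFrom_length]; simp
    have hshift : evalFrom x E1 (List.map (Gate.shift e1.compile.length) e2.compile)
        = E1 ++ E2 := by
      have := evalFrom_shift x e2.compile E1 []
      rw [hE1len] at this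
      simpa using this
    rw [hshift]
    rw [evalFrom]
    rw [evalFrom]
    simp only [gateStep]
    have hget1 : (E1 ++ E2).getD (e1.compile.length - 1) false = e1.eval x := by
      rw [List.getD_append _ _ _ _ (by omega), hE1, ih1]
    have hget2 : (E1 ++ E2).getD (e1.compile.length
        + (List.map (Gate.shift e1.compile.length) e2.compile).length - 1) false = e2.eval x := by
      rw [List.length_map]
      rw [List.getD_append_right _ _ _ _ (by omega)]
      rw [show e1.compile.length + e2.compile.length - 1 - E1.length = e2.compile.length - 1
        by omega]
      rw [hE2, ih2]
    rw [hget1, hget2]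
    rw [List.length_append, List.length_append, List.length_cons, List.length_nil,
      List.length_map]
    rw [List.getD_append_right _ _ _ _ (by rw [List.length_append]; omega)]
    rw [show e1.compile.length + e2.compile.length + (0 + 1) - 1 - (E1 ++ E2).length = 0
      by rw [List.length_append]; omega]
    rfl
  | or e1 e2 ih1 ih2 =>
    have h1pos : 0 < e1.compile.length := List.length_pos_iff.mpr e1.compile_ne_nil
    have h2pos : 0 < e2.compile.length := List.length_pos_iff.mpr e2.compile_ne_nil
    simp only [Expr.compile, Expr.eval]
    rw [evalFrom_append, evalFrom_append]
    set E1 := evalFrom x [] e1.compile with hE1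
    set E2 := evalFrom x [] e2.compile with hE2
    have hE1len : E1.length = e1.compile.length := by rw [hE1, evalFrom_length]; simp
    have hE2len : E2.length = e2.compile.length := by rw [hE2, evalFrom_length]; simp
    have hshift : evalFrom x E1 (List.map (Gate.shift e1.compile.length) e2.compile)
        = E1 ++ E2 := by
      have := evalFrom_shift x e2.compile E1 []
      rw [hE1len] at this
      simpa using this
    rw [hshift]
    rw [evalFrom]
    rw [evalFrom]
    simp only [gateStep]
    have hget1 : (E1 ++ E2).getD (e1.compile.length - 1) false = e1.eval x := by
      rw [List.getD_append _ _ _ _ (by omega), hE1, ih1]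
    have hget2 : (E1 ++ E2).getD (e1.compile.length
        + (List.map (Gate.shift e1.compile.length) e2.compile).length - 1) false = e2.eval x := by
      rw [List.length_map]
      rw [List.getD_append_right _ _ _ _ (by omega)]
      rw [show e1.compile.length + e2.compile.length - 1 - E1.length = e2.compile.length - 1
        by omega]
      rw [hE2, ih2]
    rw [hget1, hget2]
    rw [List.length_append, List.length_append, List.length_cons, List.length_nil,
      List.length_map]
    rw [List.getD_append_right _ _ _ _ (by rw [List.length_append]; omega)]
    rw [show e1.compile.length + e2.compile.length + (0 + 1) - 1 - (E1 ++ E2).length = 0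
      by rw [List.length_append]; omega]
    rfl

theorem Expr.exists_circuit {n : ℕ} (e : Expr n) :
    ∃ C : Circuit n, ∀ x, C.output x = e.eval x := by
  refine ⟨Circuit.ofList e.compile e.compile_ne_nil e.compile_wf, fun x => ?_⟩
  rw [Circuit.output, Circuit.ofList_evalGate]
  exact e.compile_correct x
/-- The minterm expression for assignment `a`. -/
def minterm {n : ℕ} (a : Fin n → Bool) : Expr n :=
  (List.finRange n).foldr
    (fun i acc => .and (if a i then .var i else .not (.var i)) acc) (.const true)

theorem minterm_eval {n : ℕ} (a x : Fin n → Bool) :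
    (minterm a).eval x = true ↔ x = a := by
  have key : ∀ L : List (Fin n),
      (L.foldr (fun i acc => Expr.and (if a i then .var i else .not (.var i)) acc)
        (.const true)).eval x = true ↔ ∀ i ∈ L, x i = a i := by
    intro L
    induction L with
    | nil => simp [Expr.eval]
    | cons i L ih =>
      simp only [List.foldr_cons, Expr.eval, Bool.and_eq_true, ih, List.mem_cons]
      constructor
      · rintro ⟨h1, h2⟩ j hj
        rcases hj with rfl | hj
        · cases haj : a j <;> simp [haj, Expr.eval] at h1 <;> simp [h1, haj]
        · exact h2 j hj
      · intro hh
        refine ⟨?_, fun j hj => hh j (Or.inr hj)⟩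
        have := hh i (Or.inl rfl)
        cases haj : a i <;> simp [haj] at this <;> simp [haj, Expr.eval, this]
  rw [minterm, key]
  constructor
  · intro hh; funext i; exact hh i (List.mem_finRange i)
  · intro hh i _; rw [hh]

/-- Every Boolean function is the evaluation of some expression (DNF). -/
theorem exists_expr {n : ℕ} (f : (Fin n → Bool) → Bool) :
    ∃ e : Expr n, ∀ x, e.eval x = f x := by
  classical
  refine ⟨((Finset.univ : Finset (Fin n → Bool)).filter fun a => f a = true).toList.foldr
    (fun a acc => .or (minterm a) acc) (.const false), fun x => ?_⟩
  have key : ∀ L : List (Fin n → Bool),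
      (L.foldr (fun a acc => Expr.or (minterm a) acc) (.const false)).eval x = true ↔
        ∃ a ∈ L, (minterm a).eval x = true := by
    intro L
    induction L with
    | nil => simp [Expr.eval]
    | cons a L ih =>
      simp [Expr.eval, ih]
  rcases hfx : f x with hv | hv
  · rw [← Bool.not_eq_true]
    rw [key]
    push_neg
    intro a ha
    rw [Finset.mem_toList, Finset.mem_filter] at ha
    intro he
    rw [(minterm_eval a x).mp he] at hfx
    rw [hfx] at ha
    simp at ha
  · rw [key]
    exact ⟨x, by rw [Finset.mem_toList, Finset.mem_filter]; exact ⟨Finset.mem_univ x, hfx⟩,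
      (minterm_eval x x).mpr rfl⟩

theorem exists_circuit_computes {n : ℕ} (f : (Fin n → Bool) → Bool) :
    ∃ C : Circuit n, C.Computes f := by
  obtain ⟨e, he⟩ := exists_expr f
  obtain ⟨C, hC⟩ := e.exists_circuit
  exact ⟨C, fun x => (hC x).trans (he x)⟩

/-- For any non-degenerated Boolean function `f : {0,1}^n → {0,1}`,
`EC(f) ≥ (1/2)·log₂ n`. -/
theorem stmt4 (n : ℕ) (f : (Fin n → Bool) → Bool) (hf : NonDegenerate f) :
    (1 / 2 : ℝ) * Real.logb 2 n ≤ (EC f : ℝ) := by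
  obtain ⟨C0, hC0⟩ := exists_circuit_computes f
  have hne : {k | ∃ C : Circuit n, C.Computes f ∧ C.energy = k}.Nonempty :=
    ⟨C0.energy, C0, hC0, rfl⟩
  obtain ⟨C, hC, hCE⟩ := Nat.sInf_mem hne
  have hEC : EC f = C.energy := by rw [EC]; exact hCE.symm
  have hn : n ≤ 2 ^ (2 * EC f) := by
    rw [hEC]
    exact circuit_lower_bound C f hC hf
  rcases Nat.eq_zero_or_pos n with rfl | hnpos
  · simp [Real.logb_zero]
  · have h1 : Real.logb 2 (n : ℝ) ≤ Real.logb 2 ((2 : ℝ) ^ (2 * EC f)) :=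
      (Real.logb_le_logb (by norm_num) (by exact_mod_cast hnpos) (by positivity)).mpr (by exact_mod_cast hn)
    rw [Real.logb_pow, Real.logb_self_eq_one (by norm_num)] at h1
    push_cast at h1
    linarith
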